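/- Let L be a principally generated C-lattice that is a lattice domain, let a ∈ L be nonzero, and let x ∈ L be a nonzero principal element. Then (x·a)_v = x·(a_v). -/

import Mathlib

/-- A multiplicative lattice: a complete lattice (bottom `⊥` playing the role of `0`)
which is a commutative monoid whose identity `1` is the top element, and in which
multiplication distributes over arbitrary joins. -/
class MulLattice (L : Type*) extends CompleteLattice L, CommMonoid L where
  one_eq_top : (1 : L) = ⊤
  mul_sSup : ∀ (a : L) (S : Set L), a * sSup S = ⨆ b ∈ S, a * b

namespace MulLattice

variable {L : Type*} [MulLattice L]

/-- The residual `(y : x) = ⋁ {a | a * x ≤ y}`. -/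
def res (y x : L) : L := sSup {a : L | a * x ≤ y}

/-- `x` is meet-principal: `y ⊓ z * x = ((y : x) ⊓ z) * x` for all `y, z`. -/
def IsMeetPrincipal (x : L) : Prop := ∀ y z : L, y ⊓ z * x = (res y x ⊓ z) * x

/-- `x` is join-principal: `y ⊔ (z : x) = ((y * x ⊔ z) : x)` for all `y, z`. -/
def IsJoinPrincipal (x : L) : Prop := ∀ y z : L, y ⊔ res z x = res (y * x ⊔ z) x

/-- `x` is principal if it is both meet-principal and join-principal. -/
def IsPrincipal (x : L) : Prop := IsMeetPrincipal x ∧ IsJoinPrincipal x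

/-- A prime element: a proper element `p` with `x * y ≤ p → x ≤ p ∨ y ≤ p`. -/
def IsPrime (p : L) : Prop := p ≠ 1 ∧ ∀ x y : L, x * y ≤ p → x ≤ p ∨ y ≤ p

/-- A maximal element: an element maximal in `L - {1}`. -/
def IsMaximal (m : L) : Prop := m ≠ 1 ∧ ∀ b : L, m < b → b = 1

end MulLattice

namespace CompleteLattice

/-- The December 2024 Mathlib definition of a compact element (since removed from this
namespace): `k ≤ sSup s` implies `k ≤` the join of a finite subset of `s`. -/
def IsCompactElement {α : Type*} [CompleteLattice α] (k : α) :=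
  ∀ s : Set α, k ≤ sSup s → ∃ t : Finset α, ↑t ⊆ s ∧ k ≤ t.sup id

end CompleteLattice

/-- A principally generated C-lattice: a multiplicative lattice in which `1` is compact,
compact elements are closed under multiplication, every element is a join of compact
elements and every element is a join of principal elements. -/
class PGCLattice (L : Type*) extends MulLattice L where
  top_isCompact : CompleteLattice.IsCompactElement (⊤ : L)
  compact_mul : ∀ a b : L, CompleteLattice.IsCompactElement a →
    CompleteLattice.IsCompactElement b → CompleteLattice.IsCompactElement (a * b)
  compactly_generated : ∀ a : L,
    a = sSup {c : L | CompleteLattice.IsCompactElement c ∧ c ≤ a}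
  principally_generated : ∀ a : L,
    a = sSup {x : L | MulLattice.IsPrincipal x ∧ x ≤ a}

namespace MulLattice

variable {L : Type*}

/-- A lattice domain: `0 = ⊥` is a prime element. -/
def IsLatticeDomain (L : Type*) [MulLattice L] : Prop := IsPrime (⊥ : L)

variable [PGCLattice L]

open Classical in
/-- The divisorial (`v`-)closure of `a`: equals `(x : (x : a))` for a nonzero principal
`x ≤ a` when such an `x` exists (in a lattice domain this is independent of the choice
of `x`), and `⊥` otherwise (in particular `vclos ⊥ = ⊥`). -/
noncomputable def vclos (a : L) : L :=
  if h : ∃ x : L, IsPrincipal x ∧ x ≠ ⊥ ∧ x ≤ a then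
    res h.choose (res h.choose a)
  else ⊥

/-- `a` is divisorial if `a = a_v`. -/
def IsDivisorial (a : L) : Prop := vclos a = a

/-- `L` is h-local: every nonzero prime is below a unique maximal element and
every nonzero element is below only finitely many maximal elements. -/
def IsHLocal (L : Type*) [PGCLattice L] : Prop :=
  (∀ r : L, r ≠ ⊥ → IsPrime r → ∃! m : L, IsMaximal m ∧ r ≤ m) ∧
  (∀ b : L, b ≠ ⊥ → {m : L | IsMaximal m ∧ b ≤ m}.Finite)

end MulLattice

/-!
Pick a nonzero principal `p ≤ a`. Cancelling the nonzero principal `x` gives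
`(x p : x a) = (p : a)`, and for `p ≤ w` one has `(x p : w) = x (p : w)`, because `(x p : w)`
lies below `x` and the meet-principal `x` then factors it. Together these give
`(x a)_v = (x p : (p : a)) = x (p : (p : a)) = x a_v`. The same two identities show that
`(p : (p : a)) = (q p : (q p : a))` for any other nonzero principal `q ≤ a`, which is symmetric
in `p` and `q`; so the closure does not depend on the chosen principal element.
-/

namespace MulLattice

section Residual

variable {L : Type*} [MulLattice L]

instance : IsQuantale L where
  mul_sSup_distrib := mul_sSup
  sSup_mul_distrib s y := by simp_rw [mul_comm _ y]; exact mul_sSup y s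

theorem le_res_iff {t y x : L} : t ≤ res y x ↔ t * x ≤ y :=
  Quantale.leftMulResiduation_le_iff_mul_le

theorem res_mul_le (y x : L) : res y x * x ≤ y :=
  le_res_iff.1 le_rfl

theorem mul_le_left (a b : L) : a * b ≤ a :=
  mul_le_of_le_one_right' (one_eq_top (L := L) ▸ le_top)

theorem le_res_self (a b : L) : b ≤ res b a :=
  le_res_iff.2 (mul_le_left b a)

theorem res_res (w x y : L) : res (res w x) y = res w (y * x) :=
  eq_of_forall_le_iff fun t => by rw [le_res_iff, le_res_iff, le_res_iff, mul_assoc]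

theorem IsMeetPrincipal.res_mul_eq {x z : L} (hx : IsMeetPrincipal x) (h : z ≤ x) :
    res z x * x = z := by
  have := hx z ⊤
  rwa [inf_top_eq, ← one_eq_top, one_mul, inf_eq_left.2 h, eq_comm] at this

theorem IsMeetPrincipal.mul {x y : L} (hx : IsMeetPrincipal x) (hy : IsMeetPrincipal y) :
    IsMeetPrincipal (x * y) := fun a z =>
  calc a ⊓ z * (x * y) = a ⊓ z * y * x := by rw [mul_comm x y, mul_assoc]
    _ = (res a x ⊓ z * y) * x := hx a (z * y)
    _ = (res (res a x) y ⊓ z) * y * x := by rw [hy (res a x) z]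
    _ = (res a (x * y) ⊓ z) * (x * y) := by rw [res_res, mul_assoc, mul_comm y x]

theorem IsJoinPrincipal.mul {x y : L} (hx : IsJoinPrincipal x) (hy : IsJoinPrincipal y) :
    IsJoinPrincipal (x * y) := fun a z =>
  calc a ⊔ res z (x * y) = a ⊔ res (res z x) y := by rw [res_res, mul_comm]
    _ = res (a * y ⊔ res z x) y := hy a (res z x)
    _ = res (res (a * y * x ⊔ z) x) y := by rw [hx (a * y) z]
    _ = res (a * (x * y) ⊔ z) (x * y) := by rw [res_res, mul_assoc, mul_comm y x]

theorem IsPrincipal.mul {x y : L} (hx : IsPrincipal x) (hy : IsPrincipal y) :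
    IsPrincipal (x * y) :=
  ⟨hx.1.mul hy.1, hx.2.mul hy.2⟩

section LatticeDomain

variable (hL : IsLatticeDomain L)
include hL

theorem IsLatticeDomain.mul_ne_bot {x a : L} (hx : x ≠ ⊥) (ha : a ≠ ⊥) : x * a ≠ ⊥ := fun h =>
  (hL.2 x a h.le).elim (fun h' => hx (le_bot_iff.1 h')) fun h' => ha (le_bot_iff.1 h')

theorem IsLatticeDomain.res_bot {x : L} (hx : x ≠ ⊥) : res ⊥ x = ⊥ :=
  le_bot_iff.1 <| sSup_le fun t ht =>
    (hL.2 t x ht).resolve_right fun h => hx (le_bot_iff.1 h)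

theorem IsLatticeDomain.res_mul_cancel {x : L} (hx : IsJoinPrincipal x) (hx0 : x ≠ ⊥) (z : L) :
    res (z * x) x = z := by
  simpa [hL.res_bot hx0] using (hx z ⊥).symm

theorem IsLatticeDomain.le_of_mul_le_mul_right {x u z : L} (hx : IsJoinPrincipal x)
    (hx0 : x ≠ ⊥) (h : u * x ≤ z * x) : u ≤ z :=
  hL.res_mul_cancel hx hx0 z ▸ le_res_iff.2 h

theorem IsLatticeDomain.res_mul_mul_cancel_left {x : L} (hx : IsJoinPrincipal x) (hx0 : x ≠ ⊥)
    (b a : L) : res (x * b) (x * a) = res b a := by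
  rw [mul_comm x a, ← res_res, mul_comm x b, hL.res_mul_cancel hx hx0]

theorem IsLatticeDomain.res_mul_left_eq_mul_res {x p w : L} (hx : IsPrincipal x) (hx0 : x ≠ ⊥)
    (hp : IsJoinPrincipal p) (hp0 : p ≠ ⊥) (hpw : p ≤ w) :
    res (x * p) w = x * res p w := by
  have hle : res (x * p) w ≤ x := hL.le_of_mul_le_mul_right hp hp0 <|
    calc res (x * p) w * p ≤ res (x * p) w * w := mul_le_mul_right hpw _
      _ ≤ x * p := res_mul_le _ _
  rw [← hx.1.res_mul_eq hle, res_res, hL.res_mul_mul_cancel_left hx.2 hx0, mul_comm]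

theorem IsLatticeDomain.res_res_eq_res_res_mul {a p q : L} (hp : IsPrincipal p) (hp0 : p ≠ ⊥)
    (hpa : p ≤ a) (hq : IsPrincipal q) (hq0 : q ≠ ⊥) :
    res p (res p a) = res (q * p) (res (q * p) a) := by
  rw [hL.res_mul_left_eq_mul_res hq hq0 hp.2 hp0 hpa, hL.res_mul_mul_cancel_left hq.2 hq0]

end LatticeDomain

end Residual

section PGCLattice

variable {L : Type*} [PGCLattice L]

theorem exists_isPrincipal_ne_bot_le {b : L} (hb : b ≠ ⊥) :
    ∃ c : L, IsPrincipal c ∧ c ≠ ⊥ ∧ c ≤ b := by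
  by_contra! h
  refine hb (le_bot_iff.1 ?_)
  rw [PGCLattice.principally_generated b]
  exact sSup_le fun c ⟨hc, hcb⟩ => (eq_or_ne c ⊥).elim le_of_eq fun hc0 => absurd hcb (h c hc hc0)

theorem IsLatticeDomain.vclos_eq_res_res (hL : IsLatticeDomain L) {a q : L}
    (hq : IsPrincipal q) (hq0 : q ≠ ⊥) (hqa : q ≤ a) : vclos a = res q (res q a) := by
  have hex : ∃ x : L, IsPrincipal x ∧ x ≠ ⊥ ∧ x ≤ a := ⟨q, hq, hq0, hqa⟩
  obtain ⟨hp, hp0, hpa⟩ := hex.choose_spec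
  rw [vclos, dif_pos hex, hL.res_res_eq_res_res_mul hp hp0 hpa hq hq0,
    hL.res_res_eq_res_res_mul hq hq0 hqa hp hp0, mul_comm]

end PGCLattice

end MulLattice

open MulLattice

theorem stmt5 {L : Type*} [PGCLattice L] (hL : IsLatticeDomain L)
    (a x : L) (ha : a ≠ ⊥) (hx0 : x ≠ ⊥) (hx : IsPrincipal x) :
    vclos (x * a) = x * vclos a := by
  obtain ⟨p, hp, hp0, hpa⟩ := exists_isPrincipal_ne_bot_le ha
  rw [hL.vclos_eq_res_res hp hp0 hpa,
    hL.vclos_eq_res_res (hx.mul hp) (hL.mul_ne_bot hx0 hp0) (mul_le_mul_right hpa x),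
    hL.res_mul_mul_cancel_left hx.2 hx0,
    hL.res_mul_left_eq_mul_res hx hx0 hp.2 hp0 (le_res_self a p)]
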